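/- Let E be a finite directed graph and let u ∈ U_E be a unitary belonging to F_E. Then the endomorphism λ_u is injective. -/

import Mathlib

/-- A finite directed graph. -/
structure FinDirGraph where
  V : Type
  E : Type
  [instFV : Fintype V]
  [instFE : Fintype E]
  [instDV : DecidableEq V]
  [instDE : DecidableEq E]
  r : E → V
  s : E → V

attribute [instance] FinDirGraph.instFV FinDirGraph.instFE FinDirGraph.instDV FinDirGraph.instDE

namespace FinDirGraph

variable (G : FinDirGraph)

/-- `G.IsPathFrom v l` : the list of edges `l` forms a path starting at vertex `v`. -/
def IsPathFrom : G.V → List G.E → Prop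
  | _, [] => True
  | v, e :: l => G.s e = v ∧ IsPathFrom (G.r e) l

/-- The terminal vertex of a list of edges starting at `v`. -/
def rangeFrom : G.V → List G.E → G.V
  | v, [] => v
  | _, e :: l => rangeFrom (G.r e) l

/-- A finite path in the graph `G`; vertices are the paths of length `0`. -/
structure Path where
  src : G.V
  edges : List G.E
  ok : G.IsPathFrom src edges

variable {G}

/-- The length of a path. -/
def Path.len (μ : G.Path) : ℕ := μ.edges.length

/-- The range (terminal vertex) of a path. -/
def Path.rng (μ : G.Path) : G.V := G.rangeFrom μ.src μ.edges

variable (G)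

/-- `G` has no sinks: every vertex emits at least one edge. -/
def NoSinks : Prop := ∀ v : G.V, ∃ e : G.E, G.s e = v

/-- `G` has no sources: every vertex receives at least one edge. -/
def NoSources : Prop := ∀ v : G.V, ∃ e : G.E, G.r e = v

/-- Every loop in `G` has an exit. -/
def EveryLoopHasExit : Prop :=
  ∀ μ : G.Path, μ.edges ≠ [] → μ.src = μ.rng →
    ∃ e ∈ μ.edges, ∃ f g : G.E, f ≠ g ∧ G.s f = G.s e ∧ G.s g = G.s e

variable (A : Type) [CStarAlgebra A] [PartialOrder A] [StarOrderedRing A]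

/-- A Cuntz–Krieger `G`-family in a unital C*-algebra `A`. -/
structure CKFamily where
  P : G.V → A
  S : G.E → A
  proj_idem : ∀ v, P v * P v = P v
  proj_sa : ∀ v, star (P v) = P v
  orth : ∀ v w, v ≠ w → P v * P w = 0
  ck1 : ∀ e, star (S e) * S e = P (G.r e)
  ck1' : ∀ e f, e ≠ f → star (S e) * S f = 0
  ck2 : ∀ e, S e * star (S e) ≤ P (G.s e)
  ck3 : ∀ v : G.V, (∃ e, G.s e = v) →
    P v = ∑ e ∈ Finset.univ.filter (fun e => G.s e = v), S e * star (S e)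

variable {G A}

/-- The partial isometry `S_μ` associated to a finite path, defined from the source. -/
def CKFamily.sFrom (F : CKFamily G A) : G.V → List G.E → A
  | v, [] => F.P v
  | _, e :: l => F.S e * F.sFrom (G.r e) l

/-- `S_μ` for a path `μ`. -/
def CKFamily.sPath (F : CKFamily G A) (μ : G.Path) : A := F.sFrom μ.src μ.edges

/-- `P_μ = S_μ S_μ*` for a path `μ`. -/
def CKFamily.pPath (F : CKFamily G A) (μ : G.Path) : A :=
  F.sPath μ * star (F.sPath μ)

variable (G A) in
/-- `A`, together with the Cuntz–Krieger family `F`, is the graph C*-algebra `C*(G)`: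
the family sums to one, generates `A` as a closed *-subalgebra, and is universal. -/
structure IsGraphCStarAlgebra (F : CKFamily G A) : Prop where
  sum_one : ∑ v : G.V, F.P v = 1
  generates :
    (StarAlgebra.adjoin ℂ (Set.range F.P ∪ Set.range F.S)).topologicalClosure = ⊤
  universal : ∀ (C : Type) [CStarAlgebra C] [PartialOrder C] [StarOrderedRing C]
    (F' : CKFamily G C), (∑ v : G.V, F'.P v) = 1 →
      ∃! φ : A →⋆ₐ[ℂ] C, (∀ v, φ (F.P v) = F'.P v) ∧ (∀ e, φ (F.S e) = F'.S e)

/-- The diagonal subalgebra `D_E`: the closed *-subalgebra generated by the `P_μ`. -/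
def CKFamily.DE (F : CKFamily G A) : StarSubalgebra ℂ A :=
  (StarAlgebra.adjoin ℂ {a : A | ∃ μ : G.Path, a = F.pPath μ}).topologicalClosure

/-- `D_E^k`: the linear span of the `P_μ`, `μ ∈ E^k`. -/
noncomputable def CKFamily.DEk (F : CKFamily G A) (k : ℕ) : Submodule ℂ A :=
  Submodule.span ℂ {a : A | ∃ μ : G.Path, μ.len = k ∧ a = F.pPath μ}

/-- The core AF-subalgebra `F_E`: closed linear span of words `S_μ S_ν*` with `|μ| = |ν|`. -/
def CKFamily.FE (F : CKFamily G A) : Set A :=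
  closure ((Submodule.span ℂ
    {a : A | ∃ μ ν : G.Path, μ.len = ν.len ∧ a = F.sPath μ * star (F.sPath ν)}
      : Submodule ℂ A) : Set A)

/-- `F_E^k`: the linear span of words `S_μ S_ν*` with `|μ| = |ν| = k`. -/
noncomputable def CKFamily.FEk (F : CKFamily G A) (k : ℕ) : Submodule ℂ A :=
  Submodule.span ℂ
    {a : A | ∃ μ ν : G.Path, μ.len = k ∧ ν.len = k ∧ a = F.sPath μ * star (F.sPath ν)}

/-- `u ∈ U_E` : `u` is a unitary commuting with all vertex projections. -/
def CKFamily.IsUE (F : CKFamily G A) (u : A) : Prop :=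
  u ∈ unitary A ∧ ∀ v, u * F.P v = F.P v * u

/-- `lam = λ_u` : the endomorphism determined by the unitary `u ∈ U_E`. -/
def CKFamily.IsLambdaU (F : CKFamily G A) (u : A) (lam : A →⋆ₐ[ℂ] A) : Prop :=
  (∀ e, lam (F.S e) = u * F.S e) ∧ (∀ v, lam (F.P v) = F.P v)

/-- The shift `φ(x) = Σ_e S_e x S_e*`. -/
def CKFamily.shift (F : CKFamily G A) (x : A) : A :=
  ∑ e : G.E, F.S e * x * star (F.S e)

/-- `u_k = u φ(u) ⋯ φ^{k-1}(u)` (with `u_0 = 1`). -/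
def CKFamily.ukProd (F : CKFamily G A) (u : A) : ℕ → A
  | 0 => 1
  | m + 1 => F.ukProd u m * F.shift^[m] u

/-- An element is a finite sum of words `S_α S_β*`. -/
def CKFamily.IsSumOfWords (F : CKFamily G A) (a : A) : Prop :=
  ∃ (n : ℕ) (μ ν : Fin n → G.Path),
    a = ∑ i, F.sPath (μ i) * star (F.sPath (ν i))

/-- The group `S_E` of unitaries of the form `Σ S_α S_β*`. -/
def CKFamily.SE (F : CKFamily G A) : Set A :=
  {a : A | a ∈ unitary A ∧ F.IsSumOfWords a}

/-- The group `P_E^k` of unitaries of the form `Σ S_α S_β*`, `|α| = |β| = k`. -/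
def CKFamily.PEk (F : CKFamily G A) (k : ℕ) : Set A :=
  {a : A | a ∈ unitary A ∧ ∃ (n : ℕ) (μ ν : Fin n → G.Path),
    (∀ i, (μ i).len = k ∧ (ν i).len = k) ∧
    a = ∑ i, F.sPath (μ i) * star (F.sPath (ν i))}

/-- `P_E = ∪_k P_E^k`. -/
def CKFamily.PE (F : CKFamily G A) : Set A := ⋃ k : ℕ, F.PEk k

/-- `γ_z` on generators: `γ (S e) = z • S e`, `γ (P v) = P v`. -/
def CKFamily.IsGaugeHom (F : CKFamily G A) (z : ℂ) (ρ : A →⋆ₐ[ℂ] A) : Prop :=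
  (∀ e, ρ (F.S e) = z • F.S e) ∧ (∀ v, ρ (F.P v) = F.P v)

/-- `γ_z` as an automorphism, on generators. -/
def CKFamily.IsGaugeAut (F : CKFamily G A) (z : ℂ) (γ : A ≃⋆ₐ[ℂ] A) : Prop :=
  (∀ e, γ (F.S e) = z • F.S e) ∧ (∀ v, γ (F.P v) = F.P v)

/-- The automorphism `α` of `C*(E)` is induced by an automorphism of the graph `E`. -/
def CKFamily.IsGraphInduced (F : CKFamily G A) (α : A ≃⋆ₐ[ℂ] A) : Prop :=
  ∃ (φV : G.V ≃ G.V) (φE : G.E ≃ G.E),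
    (∀ e, G.s (φE e) = φV (G.s e)) ∧ (∀ e, G.r (φE e) = φV (G.r e)) ∧
    (∀ e, α (F.S e) = F.S (φE e)) ∧ (∀ v, α (F.P v) = F.P (φV v))

/-- Membership in the subgroup `𝔊_E` of `Aut (C*(E))` generated by the graph
automorphisms `Γ_E` together with the automorphisms `λ_u`, `u ∈ S_E ∩ U_E`. -/
inductive CKFamily.InGG (F : CKFamily G A) : (A ≃⋆ₐ[ℂ] A) → Prop
  | gamma (α : A ≃⋆ₐ[ℂ] A) : F.IsGraphInduced α → F.InGG α
  | lam (α : A ≃⋆ₐ[ℂ] A) (u : A) : u ∈ F.SE → F.IsUE u →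
      (∀ e, α (F.S e) = u * F.S e) → (∀ v, α (F.P v) = F.P v) → F.InGG α
  | one : F.InGG (StarAlgEquiv.refl (R := ℂ) (A := A))
  | mul (α β : A ≃⋆ₐ[ℂ] A) : F.InGG α → F.InGG β → F.InGG (α.trans β)
  | inv (α : A ≃⋆ₐ[ℂ] A) : F.InGG α → F.InGG α.symm

/-- Membership in the subgroup `𝔊ℜ_E` of `Aut (C*(E))` generated by the graph
automorphisms `Γ_E` together with the automorphisms `λ_u`, `u ∈ P_E ∩ U_E`. -/
inductive CKFamily.InGGR (F : CKFamily G A) : (A ≃⋆ₐ[ℂ] A) → Prop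
  | gamma (α : A ≃⋆ₐ[ℂ] A) : F.IsGraphInduced α → F.InGGR α
  | lam (α : A ≃⋆ₐ[ℂ] A) (u : A) : u ∈ F.PE → F.IsUE u →
      (∀ e, α (F.S e) = u * F.S e) → (∀ v, α (F.P v) = F.P v) → F.InGGR α
  | one : F.InGGR (StarAlgEquiv.refl (R := ℂ) (A := A))
  | mul (α β : A ≃⋆ₐ[ℂ] A) : F.InGGR α → F.InGGR β → F.InGGR (α.trans β)
  | inv (α : A ≃⋆ₐ[ℂ] A) : F.InGGR α → F.InGGR α.symm


/-- The map `a^u_{e,f}(x) = S_e* u* x u S_f`. -/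
def CKFamily.amap (F : CKFamily G A) (u : A) (e f : G.E) (x : A) : A :=
  star (F.S e) * (star u * x * u) * F.S f

/-- Composition of the maps `a^u_{e,f}` along a list of pairs of edges. -/
def CKFamily.acomp (F : CKFamily G A) (u : A) : List (G.E × G.E) → A → A
  | [], x => x
  | p :: t, x => F.amap u p.1 p.2 (F.acomp u t x)

/-- The spaces `Ξ_r`: `Ξ_0 = F_E^{k-1}`, `Ξ_r = λ_u(H)* Ξ_{r-1} λ_u(H)`. -/
noncomputable def CKFamily.Xi (F : CKFamily G A) (u : A) (k : ℕ) : ℕ → Submodule ℂ A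
  | 0 => F.FEk (k - 1)
  | r + 1 => Submodule.span ℂ
      {a : A | ∃ x ∈ F.Xi u k r, ∃ e f : G.E, a = star (u * F.S e) * x * (u * F.S f)}

/-- The spaces `Ξ_r^D`: `Ξ_0^D = D_E^{k-1}`, `Ξ_r^D = λ_u(H)* Ξ_{r-1}^D λ_u(H)`. -/
noncomputable def CKFamily.XiD (F : CKFamily G A) (u : A) (k : ℕ) : ℕ → Submodule ℂ A
  | 0 => F.DEk (k - 1)
  | r + 1 => Submodule.span ℂ
      {a : A | ∃ x ∈ F.XiD u k r, ∃ e f : G.E, a = star (u * F.S e) * x * (u * F.S f)}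

end FinDirGraph

/-!
For `|μ| = |ν| ≤ K` one has `λ_u(S_μ S_ν*) = W_K S_μ S_ν* W_K*` for a unitary `W_K` built
recursively from `u`, the shift `φ(x) = ∑ S_e x S_e*` and the sink projection `1 - φ(1)`.
Hence `λ_u` is isometric on a dense subspace of `F_E`, so on `F_E`. As `u ∈ F_E` is fixed by the
gauge action, `λ_u` commutes with the faithful conditional expectation `Φ = ∫ γ_z dz` onto
`F_E`. If `λ_u(a) = 0`, then `λ_u(Φ(a* a)) = Φ(λ_u(a* a)) = 0`, so `Φ(a* a) = 0` and `a = 0`.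
-/

open scoped CStarAlgebra FourierTransform

lemma isClosed_setOf_continuous_apply {X E F : Type*} [TopologicalSpace X]
    [PseudoMetricSpace E] [PseudoMetricSpace F] {f : X → E → F}
    (hf : ∀ x a b, dist (f x a) (f x b) ≤ dist a b) :
    IsClosed {a | Continuous fun x => f x a} := by
  refine isClosed_of_closure_subset fun a ha => continuous_of_uniform_approx_of_continuous
    fun s hs => ?_
  obtain ⟨ε, hε, hεs⟩ := Metric.mem_uniformity_dist.mp hs
  obtain ⟨b, hb, hab⟩ := Metric.mem_closure_iff.mp ha ε hε
  exact ⟨_, hb, fun x => hεs ((hf x a b).trans_lt hab)⟩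

open Real in
lemma integral_fourierChar_zpow {d : ℤ} (hd : d ≠ 0) :
    ∫ t in (0 : ℝ)..1, ((𝐞 t ^ d : Circle) : ℂ) = 0 := by
  have hc : 2 * π * d * Complex.I ≠ 0 := by simp [hd, pi_ne_zero]
  have h : ∀ t : ℝ, ((𝐞 t ^ d : Circle) : ℂ) = Complex.exp (2 * π * d * Complex.I * t) := by
    intro t
    rw [← AddChar.map_zsmul_eq_zpow, fourierChar_apply]
    push_cast
    ring_nf
  simp only [h, integral_exp_mul_complex hc, Complex.ofReal_one, Complex.ofReal_zero, mul_one,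
    mul_zero, Complex.exp_zero]
  rw [show 2 * π * d * Complex.I = d * (2 * π * Complex.I) by ring,
    Complex.exp_int_mul_two_pi_mul_I, sub_self, zero_div]

/-- Near `a` the integrand stays close to `g a`, so the integral over a short `[a, a + δ']` has
norm at least `δ' ‖g a‖ / 2`; positivity makes the norm of the integral grow with the interval. -/
lemma intervalIntegral_ne_zero_of_nonneg {A : Type} [CStarAlgebra A] [PartialOrder A]
    [StarOrderedRing A] {g : ℝ → A} (hg : Continuous g) (hpos : ∀ t, 0 ≤ g t) {a b : ℝ}
    (hab : a < b) (ha : g a ≠ 0) : ∫ t in a..b, g t ≠ 0 := by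
  have hint : ∀ x y : ℝ, x ≤ y → 0 ≤ ∫ t in x..y, g t := fun x y hxy => by
    rw [intervalIntegral.integral_of_le hxy]
    exact MeasureTheory.integral_nonneg fun t => hpos t
  set c := ‖g a‖
  have hc : 0 < c := norm_pos_iff.mpr ha
  obtain ⟨δ, hδ, hgδ⟩ := Metric.continuousAt_iff.mp hg.continuousAt (c / 2) (half_pos hc)
  set δ' := min (δ / 2) (b - a)
  have hδ' : 0 < δ' := lt_min (half_pos hδ) (sub_pos.mpr hab)
  have hnear : ‖(∫ t in a..a + δ', g t) - δ' • g a‖ ≤ c / 2 * δ' := by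
    have h := intervalIntegral.norm_integral_le_of_norm_le_const (a := a) (b := a + δ')
      (C := c / 2) (f := fun t => g t - g a) fun t ht => by
        rw [Set.uIoc_of_le (by linarith)] at ht
        rw [← dist_eq_norm]
        refine (hgδ ?_).le
        rw [Real.dist_eq, abs_of_pos (sub_pos.mpr ht.1)]
        linarith [ht.2, min_le_left (δ / 2) (b - a)]
    rwa [intervalIntegral.integral_sub (hg.intervalIntegrable _ _) intervalIntegrable_const,
      intervalIntegral.integral_const, add_sub_cancel_left, abs_of_pos hδ'] at h
  have hlow : δ' * c / 2 ≤ ‖∫ t in a..a + δ', g t‖ := by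
    have h := norm_sub_norm_le (δ' • g a) (∫ t in a..a + δ', g t)
    rw [norm_sub_rev, norm_smul, Real.norm_of_nonneg hδ'.le] at h
    linarith
  have hmono : ‖∫ t in a..a + δ', g t‖ ≤ ‖∫ t in a..b, g t‖ := by
    refine CStarAlgebra.norm_le_norm_of_nonneg_of_le (hint _ _ (by linarith)) ?_
    rw [← intervalIntegral.integral_add_adjacent_intervals (a := a) (b := a + δ') (c := b)
      (hg.intervalIntegrable _ _) (hg.intervalIntegrable _ _), le_add_iff_nonneg_right]
    exact hint _ _ (by linarith [min_le_right (δ / 2) (b - a)])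
  intro h
  rw [h, norm_zero] at hmono
  nlinarith

namespace FinDirGraph

variable {G : FinDirGraph}

lemma isPathFrom_concat {v : G.V} {l : List G.E} (hl : G.IsPathFrom v l) {e : G.E}
    (he : G.s e = G.rangeFrom v l) : G.IsPathFrom v (l ++ [e]) := by
  induction l generalizing v with
  | nil => exact ⟨he, trivial⟩
  | cons f l ih => exact ⟨hl.1, ih hl.2 he⟩

namespace Path

def vertex (v : G.V) : G.Path := ⟨v, [], trivial⟩

def cons (e : G.E) (μ : G.Path) (h : G.r e = μ.src) : G.Path :=
  ⟨G.s e, e :: μ.edges, ⟨rfl, h ▸ μ.ok⟩⟩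

def concat (μ : G.Path) (e : G.E) (h : G.s e = μ.rng) : G.Path :=
  ⟨μ.src, μ.edges ++ [e], isPathFrom_concat μ.ok h⟩

end Path

namespace CKFamily

variable {A : Type} [CStarAlgebra A] [PartialOrder A]

section Relations

variable (F : CKFamily G A)

lemma p_mul_p (v w : G.V) : F.P v * F.P w = if v = w then F.P v else 0 := by
  split_ifs with h
  · subst h; exact F.proj_idem v
  · exact F.orth v w h

lemma commute_p_p (v w : G.V) : Commute (F.P v) (F.P w) := by
  show F.P v * F.P w = F.P w * F.P v
  rw [F.p_mul_p, F.p_mul_p]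
  by_cases h : v = w
  · subst h; rfl
  · rw [if_neg h, if_neg (Ne.symm h)]

lemma commute_star_of_commute_p {x : A} (hx : ∀ v, Commute x (F.P v)) (v : G.V) :
    Commute (star x) (F.P v) := by
  simpa only [F.proj_sa] using (hx v).star_star

lemma star_s_mul_s (e f : G.E) :
    star (F.S e) * F.S f = if e = f then F.P (G.r e) else 0 := by
  split_ifs with h
  · subst h; exact F.ck1 e
  · exact F.ck1' e f h

lemma s_mul_p_range (e : G.E) : F.S e * F.P (G.r e) = F.S e := by
  rw [← sub_eq_zero, ← CStarRing.star_mul_self_eq_zero_iff, star_sub, star_mul, F.proj_sa]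
  simp [sub_mul, mul_sub, ← mul_assoc, F.ck1, F.proj_idem, mul_assoc (F.P _) (star (F.S e))]

variable [StarOrderedRing A]

/-- `S e S e* ≤ P (s e)` forces `(1 - P (s e)) S e = 0`, by conjugating with `1 - P (s e)`. -/
lemma p_source_mul_s (e : G.E) : F.P (G.s e) * F.S e = F.S e := by
  set p := F.P (G.s e)
  set q : A := 1 - p
  have hq : star q = q := by simp [q, p, F.proj_sa]
  have hqp : q * p * star q = 0 := by
    simp [hq, q, p, sub_mul, mul_sub, F.proj_idem]
  have hle : (q * F.S e) * star (q * F.S e) ≤ 0 := by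
    rw [← hqp, star_mul, ← hq, star_star]
    simpa only [mul_assoc] using star_left_conjugate_le_conjugate (F.ck2 e) q
  have h0 : q * F.S e = 0 :=
    (CStarRing.mul_star_self_eq_zero_iff _).mp (le_antisymm hle (mul_star_self_nonneg _))
  rw [sub_mul, one_mul, sub_eq_zero] at h0
  exact h0.symm

lemma p_mul_s (v : G.V) (e : G.E) : F.P v * F.S e = if G.s e = v then F.S e else 0 := by
  split_ifs with h
  · rw [← h, F.p_source_mul_s]
  · rw [← F.p_source_mul_s, ← mul_assoc, F.orth v _ (Ne.symm h), zero_mul]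

lemma star_s_mul_p (e : G.E) (v : G.V) :
    star (F.S e) * F.P v = if G.s e = v then star (F.S e) else 0 := by
  rw [← F.proj_sa, ← star_mul, F.p_mul_s, apply_ite star, star_zero]

end Relations

section Paths

variable (F : CKFamily G A)

lemma sFrom_mul_p_rangeFrom {v : G.V} (l : List G.E) :
    F.sFrom v l * F.P (G.rangeFrom v l) = F.sFrom v l := by
  induction l generalizing v with
  | nil => exact F.proj_idem v
  | cons e l ih => simp only [sFrom, rangeFrom, mul_assoc, ih]

lemma sPath_vertex (v : G.V) : F.sPath (Path.vertex v) = F.P v := rfl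

lemma sPath_cons (e : G.E) (μ : G.Path) (h : G.r e = μ.src) :
    F.sPath (μ.cons e h) = F.S e * F.sPath μ := by
  simp only [sPath, Path.cons, sFrom, h]

lemma sPath_mul_p_rng (μ : G.Path) : F.sPath μ * F.P μ.rng = F.sPath μ :=
  F.sFrom_mul_p_rangeFrom μ.edges

variable [StarOrderedRing A]

lemma p_mul_sFrom {v : G.V} {l : List G.E} (hl : G.IsPathFrom v l) (w : G.V) :
    F.P w * F.sFrom v l = if v = w then F.sFrom v l else 0 := by
  cases l with
  | nil =>
    show F.P w * F.P v = if v = w then F.P v else 0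
    rw [F.p_mul_p]
    by_cases h : v = w
    · subst h; simp
    · simp [h, Ne.symm h]
  | cons e l => simp only [sFrom, ← mul_assoc, F.p_mul_s, hl.1, ite_mul, zero_mul]

lemma sFrom_concat {v : G.V} {l : List G.E} (hl : G.IsPathFrom v l) {e : G.E}
    (he : G.s e = G.rangeFrom v l) : F.sFrom v (l ++ [e]) = F.sFrom v l * F.S e := by
  induction l generalizing v with
  | nil =>
    simp only [List.nil_append, sFrom, F.s_mul_p_range, F.p_mul_s]
    exact (if_pos he).symm
  | cons f l ih => simp only [List.cons_append, sFrom, ih hl.2 he, mul_assoc]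

lemma sPath_concat (μ : G.Path) (e : G.E) (h : G.s e = μ.rng) :
    F.sPath (μ.concat e h) = F.sPath μ * F.S e :=
  F.sFrom_concat μ.ok h

lemma p_mul_sPath (v : G.V) (μ : G.Path) :
    F.P v * F.sPath μ = if μ.src = v then F.sPath μ else 0 :=
  F.p_mul_sFrom μ.ok v

lemma s_mul_sPath (e : G.E) (μ : G.Path) :
    F.S e * F.sPath μ = if h : G.r e = μ.src then F.sPath (μ.cons e h) else 0 := by
  rw [← F.s_mul_p_range, mul_assoc, F.p_mul_sPath]
  by_cases h : G.r e = μ.src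
  · simp [h, F.sPath_cons]
  · simp [h, Ne.symm h]

lemma sPath_mul_s (μ : G.Path) (e : G.E) :
    F.sPath μ * F.S e = if h : G.s e = μ.rng then F.sPath (μ.concat e h) else 0 := by
  rw [← F.sPath_mul_p_rng, mul_assoc, F.p_mul_s]
  by_cases h : G.s e = μ.rng
  · simp [h, F.sPath_concat]
  · simp [h]

end Paths

section Words

variable (F : CKFamily G A)

noncomputable def wordSpan : Submodule ℂ A :=
  Submodule.span ℂ {a : A | ∃ μ ν : G.Path, a = F.sPath μ * star (F.sPath ν)}

variable {F}

lemma word_mem_wordSpan (μ ν : G.Path) : F.sPath μ * star (F.sPath ν) ∈ F.wordSpan :=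
  Submodule.subset_span ⟨μ, ν, rfl⟩

lemma sPath_mem_wordSpan (μ : G.Path) : F.sPath μ ∈ F.wordSpan := by
  simpa only [sPath_vertex, F.proj_sa, F.sPath_mul_p_rng] using
    word_mem_wordSpan (F := F) μ (Path.vertex μ.rng)

lemma star_sPath_mem_wordSpan (μ : G.Path) : star (F.sPath μ) ∈ F.wordSpan := by
  have h := word_mem_wordSpan (F := F) (Path.vertex μ.rng) μ
  rwa [sPath_vertex, ← F.proj_sa, ← star_mul, F.sPath_mul_p_rng] at h

lemma mul_mem_wordSpan_of_forall_word {x y : A}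
    (hx : ∀ μ ν : G.Path, x * (F.sPath μ * star (F.sPath ν)) ∈ F.wordSpan)
    (hy : y ∈ F.wordSpan) : x * y ∈ F.wordSpan := by
  induction hy using Submodule.span_induction with
  | mem a ha => obtain ⟨μ, ν, rfl⟩ := ha; exact hx μ ν
  | zero => rw [mul_zero]; exact zero_mem _
  | add a b _ _ ha hb => rw [mul_add]; exact add_mem ha hb
  | smul c a _ ha => rw [mul_smul_comm]; exact Submodule.smul_mem _ c ha

variable [StarOrderedRing A]

lemma p_mul_word_mem (v : G.V) (μ ν : G.Path) :
    F.P v * (F.sPath μ * star (F.sPath ν)) ∈ F.wordSpan := by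
  rw [← mul_assoc, F.p_mul_sPath]
  split_ifs
  · exact word_mem_wordSpan μ ν
  · simp

lemma s_mul_word_mem (e : G.E) (μ ν : G.Path) :
    F.S e * (F.sPath μ * star (F.sPath ν)) ∈ F.wordSpan := by
  rw [← mul_assoc, F.s_mul_sPath]
  split_ifs
  · exact word_mem_wordSpan _ ν
  · simp

lemma star_s_mul_word_mem (e : G.E) (μ ν : G.Path) :
    star (F.S e) * (F.sPath μ * star (F.sPath ν)) ∈ F.wordSpan := by
  obtain ⟨v, _ | ⟨f, l⟩, hμ⟩ := μ
  · have : star (F.S e) * (F.P v * star (F.sPath ν)) = star (F.sPath ν * (F.P v * F.S e)) := by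
      simp only [star_mul, F.proj_sa, mul_assoc]
    simp only [sPath, sFrom] at this ⊢
    rw [this, F.p_mul_s]
    split_ifs
    · rw [← sPath, F.sPath_mul_s]
      split_ifs
      · exact star_sPath_mem_wordSpan _
      · simp
    · simp
  · have : star (F.S e) * (F.S f * F.sFrom (G.r f) l * star (F.sPath ν)) =
        (star (F.S e) * F.S f) * F.sFrom (G.r f) l * star (F.sPath ν) := by
      simp only [mul_assoc]
    simp only [sPath, sFrom] at this ⊢
    rw [this, F.star_s_mul_s]
    split_ifs with h
    · subst h
      rw [F.p_mul_sFrom hμ.2, if_pos rfl]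
      exact word_mem_wordSpan ⟨G.r e, l, hμ.2⟩ ν
    · simp

lemma mul_mem_wordSpan_of_mem_adjoin {x y : A}
    (hx : x ∈ StarAlgebra.adjoin ℂ (Set.range F.P ∪ Set.range F.S)) (hy : y ∈ F.wordSpan) :
    x * y ∈ F.wordSpan := by
  rw [← StarSubalgebra.mem_toSubalgebra, StarAlgebra.adjoin_toSubalgebra] at hx
  induction hx using Algebra.adjoin_induction generalizing y with
  | mem x hx =>
    refine mul_mem_wordSpan_of_forall_word (fun μ ν => ?_) hy
    rcases hx with (⟨v, rfl⟩ | ⟨e, rfl⟩) | ⟨v, hv⟩ | ⟨e, he⟩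
    · exact p_mul_word_mem v μ ν
    · exact s_mul_word_mem e μ ν
    · rw [← star_star x, ← hv, F.proj_sa]; exact p_mul_word_mem v μ ν
    · rw [← star_star x, ← he]; exact star_s_mul_word_mem e μ ν
  | algebraMap r =>
    rw [Algebra.algebraMap_eq_smul_one, smul_one_mul]; exact Submodule.smul_mem _ r hy
  | add a b _ _ ha hb => rw [add_mul]; exact add_mem (ha hy) (hb hy)
  | mul a b _ _ ha hb => rw [mul_assoc]; exact ha (hb hy)

end Words

section Shift

variable (F : CKFamily G A)

lemma shift_star (x : A) : F.shift (star x) = star (F.shift x) := by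
  simp only [shift, star_sum, star_mul, star_star, mul_assoc]

lemma shift_mul_s {x : A} (hx : ∀ v, Commute x (F.P v)) (e : G.E) :
    F.shift x * F.S e = F.S e * x := by
  rw [shift, Finset.sum_mul, Finset.sum_eq_single e]
  · rw [mul_assoc, F.ck1, mul_assoc, (hx _).eq, ← mul_assoc, F.s_mul_p_range]
  · intro f _ hfe
    rw [mul_assoc, F.ck1' f e hfe, mul_zero]
  · simp

lemma star_s_mul_shift {x : A} (hx : ∀ v, Commute x (F.P v)) (e : G.E) :
    star (F.S e) * F.shift x = x * star (F.S e) := by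
  have h := congrArg star (F.shift_mul_s (F.commute_star_of_commute_p hx) e)
  rwa [star_mul, star_mul, star_star, F.shift_star, star_star] at h

lemma shift_mul (x : A) {y : A} (hy : ∀ v, Commute y (F.P v)) :
    F.shift (x * y) = F.shift x * F.shift y := by
  rw [shift, shift, Finset.sum_mul]
  refine Finset.sum_congr rfl fun e _ => ?_
  rw [mul_assoc (F.S e * x), F.star_s_mul_shift hy]
  simp only [mul_assoc]

lemma shift_one_eq_sum : F.shift 1 = ∑ v : G.V, if ∃ e, G.s e = v then F.P v else 0 := by
  rw [shift, ← Finset.sum_fiberwise Finset.univ G.s]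
  refine Finset.sum_congr rfl fun v _ => ?_
  split_ifs with hv
  · simp [F.ck3 v hv]
  · exact Finset.sum_eq_zero fun e he => absurd ⟨e, (Finset.mem_filter.mp he).2⟩ hv

lemma commute_shift_one {x : A} (hx : ∀ v, Commute x (F.P v)) : Commute x (F.shift 1) := by
  rw [shift_one_eq_sum]
  exact Commute.sum_right _ _ _ fun v _ => by split_ifs <;> simp [hx v]

/-- `1 - φ(1)` is the sum of the projections `P v` over the sinks `v`. -/
noncomputable def sinkProj : A := 1 - F.shift 1

lemma star_sinkProj : star F.sinkProj = F.sinkProj := by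
  rw [sinkProj, star_sub, star_one, ← F.shift_star, star_one]

lemma commute_sinkProj {x : A} (hx : ∀ v, Commute x (F.P v)) : Commute x F.sinkProj :=
  (Commute.one_right x).sub_right (F.commute_shift_one hx)

lemma sinkProj_mul_s (e : G.E) : F.sinkProj * F.S e = 0 := by
  rw [sinkProj, sub_mul, one_mul, F.shift_mul_s (fun v => Commute.one_left _), mul_one,
    sub_self]

lemma sinkProj_mul_shift (x : A) : F.sinkProj * F.shift x = 0 := by
  simp only [shift, Finset.mul_sum, ← mul_assoc, F.sinkProj_mul_s, zero_mul,
    Finset.sum_const_zero]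

lemma sinkProj_mul_self : F.sinkProj * F.sinkProj = F.sinkProj := by
  nth_rewrite 2 [sinkProj]
  rw [mul_sub, mul_one, sinkProj_mul_shift, sub_zero]

lemma shift_mul_sinkProj (x : A) : F.shift x * F.sinkProj = 0 := by
  have h := congrArg star (F.sinkProj_mul_shift (star x))
  rwa [star_mul, F.star_sinkProj, F.shift_star, star_star, star_zero] at h

variable [StarOrderedRing A]

lemma commute_shift_p (x : A) (v : G.V) : Commute (F.shift x) (F.P v) := by
  show F.shift x * F.P v = F.P v * F.shift x
  simp only [shift, Finset.sum_mul, Finset.mul_sum, mul_assoc, F.star_s_mul_p,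
    ← mul_assoc (F.P v), F.p_mul_s]
  refine Finset.sum_congr rfl fun e _ => ?_
  split_ifs <;> simp

end Shift

section Core

variable (F : CKFamily G A)

/-- `lamUnitary u K = ∑ λ_u(S_μ) S_μ*`, the sum over the paths `μ` with `|μ| = K` or with
`|μ| < K` ending at a sink; it implements `λ_u` on `F_E^k` for every `k ≤ K`. -/
noncomputable def lamUnitary (u : A) : ℕ → A
  | 0 => 1
  | K + 1 => F.sinkProj + u * F.shift (lamUnitary u K)

noncomputable def coreSpan : Submodule ℂ A :=
  Submodule.span ℂ {a : A | ∃ μ ν : G.Path, μ.len = ν.len ∧ a = F.sPath μ * star (F.sPath ν)}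

variable {F} [StarOrderedRing A] {u : A} {lam : A →⋆ₐ[ℂ] A}

lemma commute_lamUnitary_p (hu : ∀ v, Commute u (F.P v)) (K : ℕ) (v : G.V) :
    Commute (F.lamUnitary u K) (F.P v) := by
  induction K with
  | zero => exact Commute.one_left _
  | succ K _ =>
    exact (F.commute_sinkProj fun w => F.commute_p_p v w).symm.add_left
      ((hu v).mul_left (F.commute_shift_p _ v))

lemma lamUnitary_succ_mul_s (hu : ∀ v, Commute u (F.P v)) (K : ℕ) (e : G.E) :
    F.lamUnitary u (K + 1) * F.S e = u * F.S e * F.lamUnitary u K := by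
  rw [lamUnitary, add_mul, F.sinkProj_mul_s, zero_add, mul_assoc,
    F.shift_mul_s (commute_lamUnitary_p hu K), ← mul_assoc]

lemma lamUnitary_mem_unitary (hu : F.IsUE u) (K : ℕ) : F.lamUnitary u K ∈ unitary A := by
  induction K with
  | zero => exact one_mem _
  | succ K ih =>
    have hWP := commute_lamUnitary_p hu.2 K
    have hup : Commute u F.sinkProj := F.commute_sinkProj hu.2
    have hsup : Commute (star u) F.sinkProj := F.star_sinkProj ▸ hup.star_star
    have hW : star (F.lamUnitary u K) * F.lamUnitary u K = 1 := Unitary.star_mul_self_of_mem ih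
    have hW' : F.lamUnitary u K * star (F.lamUnitary u K) = 1 := Unitary.mul_star_self_of_mem ih
    rw [Unitary.mem_iff]
    simp only [lamUnitary, star_add, star_mul, F.star_sinkProj, ← F.shift_star, add_mul, mul_add,
      F.sinkProj_mul_self]
    constructor
    · rw [mul_assoc _ (star u), hsup.eq, ← mul_assoc, F.shift_mul_sinkProj, zero_mul,
        ← mul_assoc F.sinkProj, ← hup.eq, mul_assoc u, F.sinkProj_mul_shift, mul_zero,
        mul_assoc, ← mul_assoc (star u), Unitary.star_mul_self_of_mem hu.1, one_mul,
        ← F.shift_mul _ hWP, hW]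
      simp [sinkProj]
    · rw [mul_assoc u, F.shift_mul_sinkProj, mul_zero, ← mul_assoc F.sinkProj,
        F.sinkProj_mul_shift, zero_mul, mul_assoc u, ← mul_assoc (F.shift _),
        ← F.shift_mul _ (F.commute_star_of_commute_p hWP), hW', ← mul_assoc,
        (F.commute_shift_one hu.2).eq, mul_assoc, Unitary.mul_star_self_of_mem hu.1, mul_one]
      simp [sinkProj]

lemma lam_sFrom_mul_star_sFrom (hu : F.IsUE u) (hlam : F.IsLambdaU u lam) {v w : G.V}
    {l m : List G.E} {K : ℕ} (hlm : l.length = m.length) (hK : l.length ≤ K) :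
    lam (F.sFrom v l * star (F.sFrom w m)) =
      F.lamUnitary u K * (F.sFrom v l * star (F.sFrom w m)) * star (F.lamUnitary u K) := by
  induction l generalizing v w m K with
  | nil =>
    obtain rfl : m = [] := List.eq_nil_of_length_eq_zero hlm.symm
    have hc : Commute (F.lamUnitary u K) (F.P v * star (F.P w)) := by
      rw [F.proj_sa]
      exact (commute_lamUnitary_p hu.2 K v).mul_right (commute_lamUnitary_p hu.2 K w)
    simp only [sFrom]
    rw [map_mul, map_star, hlam.2, hlam.2, hc.eq, mul_assoc,
      Unitary.mul_star_self_of_mem (lamUnitary_mem_unitary hu K), mul_one]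
  | cons e l ih =>
    obtain _ | ⟨f, m⟩ := m
    · simp at hlm
    obtain _ | K := K
    · simp at hK
    have hX := ih (v := G.r e) (w := G.r f) (K := K) (by simpa using hlm) (by simpa using hK)
    calc lam (F.S e * F.sFrom (G.r e) l * star (F.S f * F.sFrom (G.r f) m))
        = lam (F.S e) * lam (F.sFrom (G.r e) l * star (F.sFrom (G.r f) m)) *
            star (lam (F.S f)) := by
          simp only [star_mul, map_mul, map_star, mul_assoc]
      _ = (F.lamUnitary u (K + 1) * F.S e) *
            (F.sFrom (G.r e) l * star (F.sFrom (G.r f) m)) *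
            star (F.lamUnitary u (K + 1) * F.S f) := by
          rw [hlam.1, hlam.1, hX, lamUnitary_succ_mul_s hu.2, lamUnitary_succ_mul_s hu.2]
          simp only [star_mul, mul_assoc]
      _ = _ := by simp only [sFrom, star_mul, mul_assoc]

lemma exists_lam_eq_conj (hu : F.IsUE u) (hlam : F.IsLambdaU u lam) {x : A}
    (hx : x ∈ F.coreSpan) :
    ∃ K, ∀ k ≥ K, lam x = F.lamUnitary u k * x * star (F.lamUnitary u k) := by
  induction hx using Submodule.span_induction with
  | mem a ha =>
    obtain ⟨μ, ν, hμν, rfl⟩ := ha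
    exact ⟨μ.len, fun k hk => lam_sFrom_mul_star_sFrom hu hlam hμν hk⟩
  | zero => exact ⟨0, fun k _ => by simp⟩
  | add a b _ _ ha hb =>
    obtain ⟨Ka, ha⟩ := ha
    obtain ⟨Kb, hb⟩ := hb
    refine ⟨max Ka Kb, fun k hk => ?_⟩
    rw [map_add, ha k (le_of_max_le_left hk), hb k (le_of_max_le_right hk), mul_add, add_mul]
  | smul c a _ ha =>
    obtain ⟨K, ha⟩ := ha
    exact ⟨K, fun k hk => by rw [map_smul, ha k hk, mul_smul_comm, smul_mul_assoc]⟩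

lemma norm_lam_of_mem_coreSpan (hu : F.IsUE u) (hlam : F.IsLambdaU u lam) {x : A}
    (hx : x ∈ F.coreSpan) : ‖lam x‖ = ‖x‖ := by
  obtain ⟨K, hK⟩ := exists_lam_eq_conj hu hlam hx
  have hW := lamUnitary_mem_unitary hu K
  rw [hK K le_rfl, CStarRing.norm_mul_mem_unitary _ (Unitary.star_mem hW),
    CStarRing.norm_mem_unitary_mul _ hW]

lemma norm_lam_of_mem_FE (hu : F.IsUE u) (hlam : F.IsLambdaU u lam) {x : A} (hx : x ∈ F.FE) :
    ‖lam x‖ = ‖x‖ :=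
  closure_minimal (fun _ hy => norm_lam_of_mem_coreSpan hu hlam hy)
    (isClosed_eq (map_continuous lam).norm continuous_norm) hx

lemma eq_zero_of_mem_FE_of_lam_eq_zero (hu : F.IsUE u) (hlam : F.IsLambdaU u lam) {x : A}
    (hx : x ∈ F.FE) (h : lam x = 0) : x = 0 := by
  simpa [h] using (norm_lam_of_mem_FE hu hlam hx).symm

end Core

section Twist

variable (F : CKFamily G A)

lemma isUE_smul_one (z : Circle) : F.IsUE ((z : ℂ) • (1 : A)) := by
  refine ⟨?_, fun v => by simp⟩
  rw [Unitary.mem_iff, star_smul, star_one, smul_mul_smul, smul_mul_smul, one_mul, mul_comm,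
    RCLike.star_def, ← Circle.coe_inv_eq_conj, ← Circle.coe_mul, mul_inv_cancel]
  simp

variable [StarOrderedRing A]

def twist {w : A} (hw : F.IsUE w) : CKFamily G A where
  P := F.P
  S e := w * F.S e
  proj_idem := F.proj_idem
  proj_sa := F.proj_sa
  orth := F.orth
  ck1 e := by rw [star_mul, mul_assoc, ← mul_assoc (star w), Unitary.star_mul_self_of_mem hw.1,
    one_mul, F.ck1]
  ck1' e f hef := by rw [star_mul, mul_assoc, ← mul_assoc (star w),
    Unitary.star_mul_self_of_mem hw.1, one_mul, F.ck1' e f hef]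
  ck2 e :=
    calc w * F.S e * star (w * F.S e) = w * (F.S e * star (F.S e)) * star w := by
          simp only [star_mul, mul_assoc]
      _ ≤ w * F.P (G.s e) * star w := star_right_conjugate_le_conjugate (F.ck2 e) w
      _ = F.P (G.s e) := by rw [hw.2, mul_assoc, Unitary.mul_star_self_of_mem hw.1, mul_one]
  ck3 v hv :=
    calc F.P v = w * F.P v * star w := by
          rw [hw.2, mul_assoc, Unitary.mul_star_self_of_mem hw.1, mul_one]
      _ = _ := by simp only [F.ck3 v hv, Finset.mul_sum, Finset.sum_mul, star_mul, mul_assoc]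

end Twist

end CKFamily

namespace IsGraphCStarAlgebra

variable {A : Type} [CStarAlgebra A] [PartialOrder A] {F : CKFamily G A}

lemma eq_top_of_isClosed (hGA : IsGraphCStarAlgebra G A F) {B : StarSubalgebra ℂ A}
    (hB : IsClosed (B : Set A)) (hP : ∀ v, F.P v ∈ B) (hS : ∀ e, F.S e ∈ B) : B = ⊤ :=
  top_unique <| hGA.generates ▸ StarSubalgebra.topologicalClosure_minimal
    (StarAlgebra.adjoin_le (by rintro _ (⟨v, rfl⟩ | ⟨e, rfl⟩) <;> simp [hP, hS])) hB

lemma starAlgHom_ext (hGA : IsGraphCStarAlgebra G A F) {φ ψ : A →⋆ₐ[ℂ] A}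
    (hP : ∀ v, φ (F.P v) = ψ (F.P v)) (hS : ∀ e, φ (F.S e) = ψ (F.S e)) : φ = ψ := by
  have hB := hGA.eq_top_of_isClosed (B := StarAlgHom.equalizer φ ψ)
    (isClosed_eq (map_continuous φ) (map_continuous ψ)) hP hS
  exact StarAlgHom.ext fun a => (hB ▸ StarSubalgebra.mem_top : a ∈ StarAlgHom.equalizer φ ψ)

variable [StarOrderedRing A]

lemma dense_wordSpan (hGA : IsGraphCStarAlgebra G A F) : Dense (F.wordSpan : Set A) := by
  have hone : (1 : A) ∈ F.wordSpan :=
    hGA.sum_one ▸ Submodule.sum_mem _ fun v _ => CKFamily.sPath_mem_wordSpan (Path.vertex v)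
  have hle : (StarAlgebra.adjoin ℂ (Set.range F.P ∪ Set.range F.S) : Set A) ⊆ F.wordSpan :=
    fun x hx => mul_one x ▸ CKFamily.mul_mem_wordSpan_of_mem_adjoin hx hone
  intro a
  exact closure_mono hle (hGA.generates ▸ StarSubalgebra.mem_top :
    a ∈ (StarAlgebra.adjoin ℂ (Set.range F.P ∪ Set.range F.S)).topologicalClosure)

lemma exists_isLambdaU (hGA : IsGraphCStarAlgebra G A F) {w : A} (hw : F.IsUE w) :
    ∃ φ : A →⋆ₐ[ℂ] A, F.IsLambdaU w φ := by
  obtain ⟨φ, ⟨hP, hS⟩, -⟩ := hGA.universal A (F.twist hw) hGA.sum_one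
  exact ⟨φ, hS, hP⟩

noncomputable def gauge (hGA : IsGraphCStarAlgebra G A F) (z : Circle) : A →⋆ₐ[ℂ] A :=
  (hGA.exists_isLambdaU (F.isUE_smul_one z)).choose

lemma isGaugeHom_gauge (hGA : IsGraphCStarAlgebra G A F) (z : Circle) :
    F.IsGaugeHom z (hGA.gauge z) := by
  obtain ⟨hS, hP⟩ := (hGA.exists_isLambdaU (F.isUE_smul_one z)).choose_spec
  exact ⟨fun e => by rw [gauge, hS, smul_one_mul], hP⟩

lemma gauge_sFrom (hGA : IsGraphCStarAlgebra G A F) (z : Circle) (v : G.V) (l : List G.E) :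
    hGA.gauge z (F.sFrom v l) = (z : ℂ) ^ l.length • F.sFrom v l := by
  induction l generalizing v with
  | nil => simp [CKFamily.sFrom, (hGA.isGaugeHom_gauge z).2]
  | cons e l ih =>
    rw [CKFamily.sFrom, map_mul, (hGA.isGaugeHom_gauge z).1, ih, smul_mul_smul, List.length_cons,
      pow_succ']

lemma gauge_word (hGA : IsGraphCStarAlgebra G A F) (z : Circle) (μ ν : G.Path) :
    hGA.gauge z (F.sPath μ * star (F.sPath ν)) =
      ((z ^ ((μ.len : ℤ) - ν.len) : Circle) : ℂ) • (F.sPath μ * star (F.sPath ν)) := by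
  rw [map_mul, map_star, CKFamily.sPath, CKFamily.sPath, gauge_sFrom, gauge_sFrom, star_smul,
    smul_mul_smul, zpow_sub, zpow_natCast, zpow_natCast, Circle.coe_mul, Circle.coe_inv_eq_conj]
  simp [Path.len]

lemma gauge_eq_self_of_mem_FE (hGA : IsGraphCStarAlgebra G A F) (z : Circle) {a : A}
    (ha : a ∈ F.FE) : hGA.gauge z a = a := by
  refine closure_minimal (fun x hx => ?_) (isClosed_eq (map_continuous _) continuous_id) ha
  induction hx using Submodule.span_induction with
  | mem x hx =>
    obtain ⟨μ, ν, hμν, rfl⟩ := hx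
    simp [gauge_word, hμν]
  | zero => exact map_zero _
  | add x y _ _ hx hy => exact (map_add _ x y).trans (congrArg₂ _ hx hy)
  | smul c x _ hx => exact (map_smul _ c x).trans (congrArg _ hx)

lemma gauge_one (hGA : IsGraphCStarAlgebra G A F) : hGA.gauge 1 = StarAlgHom.id ℂ A :=
  hGA.starAlgHom_ext (fun v => (hGA.isGaugeHom_gauge 1).2 v)
    (fun e => by simp [(hGA.isGaugeHom_gauge 1).1])

lemma gauge_comp_lam (hGA : IsGraphCStarAlgebra G A F) {u : A} {lam : A →⋆ₐ[ℂ] A}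
    (hlam : F.IsLambdaU u lam) (huF : u ∈ F.FE) (z : Circle) :
    (hGA.gauge z).comp lam = lam.comp (hGA.gauge z) := by
  have hγ := hGA.isGaugeHom_gauge z
  refine hGA.starAlgHom_ext (fun v => by simp [hlam.2, hγ.2]) fun e => ?_
  simp only [StarAlgHom.comp_apply, hlam.1, hγ.1, map_mul, map_smul,
    hGA.gauge_eq_self_of_mem_FE z huF, mul_smul_comm]

lemma continuous_gauge_apply (hGA : IsGraphCStarAlgebra G A F) (a : A) :
    Continuous fun z : Circle => hGA.gauge z a := by
  let M : Submodule ℂ A :=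
    { carrier := {a | Continuous fun z : Circle => hGA.gauge z a}
      add_mem' := fun ha hb => by show Continuous _; simp only [map_add]; exact ha.add hb
      zero_mem' := by show Continuous _; simp only [map_zero]; exact continuous_const
      smul_mem' := fun c a ha => by show Continuous _; simp only [map_smul]; exact ha.const_smul c }
  have hclosed : IsClosed (M : Set A) := isClosed_setOf_continuous_apply fun z a b => by
    simpa only [dist_eq_norm, map_sub] using NonUnitalStarAlgHom.norm_apply_le (hGA.gauge z) (a - b)
  have hwords : (F.wordSpan : Set A) ⊆ M := Submodule.span_le.mpr <| by
    rintro _ ⟨μ, ν, rfl⟩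
    show Continuous _
    simp only [gauge_word]
    exact (continuous_zpow (G := Circle) _).smul continuous_const
  exact hclosed.closure_subset_iff.mpr hwords (hGA.dense_wordSpan a)

lemma intervalIntegrable_gauge (hGA : IsGraphCStarAlgebra G A F) (a : A) :
    IntervalIntegrable (fun t => hGA.gauge (𝐞 t) a) MeasureTheory.volume 0 1 :=
  ((hGA.continuous_gauge_apply a).comp Real.continuous_fourierChar).intervalIntegrable 0 1

noncomputable def condExp (hGA : IsGraphCStarAlgebra G A F) : A →L[ℂ] A :=
  LinearMap.mkContinuous
    { toFun a := ∫ t in (0 : ℝ)..1, hGA.gauge (𝐞 t) a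
      map_add' a b := by
        simp only [map_add]
        exact intervalIntegral.integral_add (hGA.intervalIntegrable_gauge a)
          (hGA.intervalIntegrable_gauge b)
      map_smul' c a := by
        simp only [map_smul, RingHom.id_apply]
        exact intervalIntegral.integral_smul c _ }
    1 fun a => by
      simpa using intervalIntegral.norm_integral_le_of_norm_le_const (a := 0) (b := 1)
        fun t _ => NonUnitalStarAlgHom.norm_apply_le (hGA.gauge (𝐞 t)) a

lemma condExp_apply (hGA : IsGraphCStarAlgebra G A F) (a : A) :
    hGA.condExp a = ∫ t in (0 : ℝ)..1, hGA.gauge (𝐞 t) a :=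
  rfl

lemma condExp_word_mem_coreSpan (hGA : IsGraphCStarAlgebra G A F) (μ ν : G.Path) :
    hGA.condExp (F.sPath μ * star (F.sPath ν)) ∈ F.coreSpan := by
  simp only [condExp_apply, gauge_word, intervalIntegral.integral_smul_const]
  by_cases hμν : μ.len = ν.len
  · simp only [hμν, sub_self, zpow_zero, Circle.coe_one, intervalIntegral.integral_const,
      sub_zero, one_smul]
    exact Submodule.subset_span ⟨μ, ν, hμν, rfl⟩
  · rw [integral_fourierChar_zpow (d := (μ.len : ℤ) - ν.len) (by omega), zero_smul]
    exact zero_mem _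

lemma condExp_mem_FE (hGA : IsGraphCStarAlgebra G A F) (a : A) : hGA.condExp a ∈ F.FE := by
  let M := F.coreSpan.topologicalClosure.comap (hGA.condExp : A →ₗ[ℂ] A)
  have hclosed : IsClosed (M : Set A) :=
    F.coreSpan.isClosed_topologicalClosure.preimage hGA.condExp.continuous
  have hwords : (F.wordSpan : Set A) ⊆ M := Submodule.span_le.mpr <| by
    rintro _ ⟨μ, ν, rfl⟩
    exact F.coreSpan.le_topologicalClosure (hGA.condExp_word_mem_coreSpan μ ν)
  exact hclosed.closure_subset_iff.mpr hwords (hGA.dense_wordSpan a)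

lemma lam_condExp (hGA : IsGraphCStarAlgebra G A F) {u : A} {lam : A →⋆ₐ[ℂ] A}
    (hlam : F.IsLambdaU u lam) (huF : u ∈ F.FE) (a : A) :
    lam (hGA.condExp a) = hGA.condExp (lam a) := by
  let L : A →L[ℂ] A := ⟨lam.toAlgHom.toLinearMap, map_continuous lam⟩
  change L (hGA.condExp a) = _
  rw [condExp_apply, condExp_apply, ← L.intervalIntegral_comp_comm (hGA.intervalIntegrable_gauge a)]
  congr 1 with t
  exact (DFunLike.congr_fun (hGA.gauge_comp_lam hlam huF (𝐞 t)) a).symm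

lemma eq_zero_of_condExp_star_mul_self (hGA : IsGraphCStarAlgebra G A F) {a : A}
    (h : hGA.condExp (star a * a) = 0) : a = 0 := by
  by_contra ha
  refine intervalIntegral_ne_zero_of_nonneg
    ((hGA.continuous_gauge_apply _).comp Real.continuous_fourierChar) (fun t => ?_) one_pos ?_ h
  · simpa only [Function.comp_apply, map_mul, map_star] using star_mul_self_nonneg _
  · simpa [AddChar.map_zero_eq_one, gauge_one] using ha

end IsGraphCStarAlgebra

end FinDirGraph

open FinDirGraph in
/-- Proposition 2.1 (coreinjectivity). -/
theorem stmt_19 (G : FinDirGraph)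
    (A : Type) [CStarAlgebra A] [PartialOrder A] [StarOrderedRing A]
    (F : CKFamily G A) (hGA : IsGraphCStarAlgebra G A F)
    (u : A) (hu : F.IsUE u) (huF : u ∈ F.FE)
    (lam : A →⋆ₐ[ℂ] A) (hlam : F.IsLambdaU u lam) :
    Function.Injective lam := by
  refine (injective_iff_map_eq_zero lam).mpr fun a ha => hGA.eq_zero_of_condExp_star_mul_self ?_
  refine CKFamily.eq_zero_of_mem_FE_of_lam_eq_zero hu hlam (hGA.condExp_mem_FE _) ?_
  rw [hGA.lam_condExp hlam huF, map_mul, map_star, ha, star_zero, zero_mul, map_zero]
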